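/- Consider the financial network with five banks v1,…,v5, external assets e_{v4} = 8 and all other external assets 0, liabilities l_{v4,v1} = l_{v4,v2} = 1, l_{v4,v3} = l_{v4,v5} = 4, l_{v3,v2} = 4, l_{v5,v1} = 8/9 (all others 0), default costs α = β = 1/4, and no cash injections. Then the edge-removal game on this network admits no pure Nash equilibrium. -/
import Mathlib


open Finset

/-- `p` is a proportional clearing payment matrix for the network with external assets `e`,
liabilities `l` and default costs `α, β`. -/
def IsClearing {ι : Type*} [Fintype ι] (α β : ℝ) (e : ι → ℝ) (l : ι → ι → ℝ)
    (p : ι → ι → ℝ) : Prop :=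
  (∀ i j, 0 ≤ p i j) ∧ (∀ i j, p i j ≤ l i j) ∧
  (∀ i, (∑ j, l i j) ≤ e i + (∑ j, p j i) → ∀ j, p i j = l i j) ∧
  (∀ i, e i + (∑ j, p j i) < (∑ j, l i j) →
    ∀ j, p i j = (α * e i + β * (∑ k, p k i)) * l i j / (∑ k, l i k))

/-- `p` is the maximal clearing payment matrix. -/
def IsMaxClearing {ι : Type*} [Fintype ι] (α β : ℝ) (e : ι → ℝ) (l p : ι → ι → ℝ) : Prop :=
  IsClearing α β e l p ∧ ∀ q, IsClearing α β e l q → ∀ i j, q i j ≤ p i j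

/-- Total assets of bank `i` under payments `p`. -/
def assets {ι : Type*} [Fintype ι] (e : ι → ℝ) (p : ι → ι → ℝ) (i : ι) : ℝ :=
  e i + ∑ j, p j i

/-- The liabilities obtained from `l` when each bank `j` removes the incoming edges from
the banks in `s j`. -/
def removeEdges {ι : Type*} [DecidableEq ι] (l : ι → ι → ℝ) (s : ι → Finset ι) :
    ι → ι → ℝ :=
  fun i j => if i ∈ s j then 0 else l i j

/-- `s` is a pure Nash equilibrium of the edge-removal game with payment rule `Pay`. -/
def NashEq {ι : Type*} [Fintype ι] [DecidableEq ι] (e : ι → ℝ)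
    (Pay : (ι → Finset ι) → ι → ι → ℝ) (s : ι → Finset ι) : Prop :=
  ∀ (j : ι) (R : Finset ι),
    assets e (Pay (Function.update s j R)) j ≤ assets e (Pay s) j

noncomputable section NE

def NE.e : Fin 5 → ℝ := fun i => if i = 3 then 8 else 0

def NE.l : Fin 5 → Fin 5 → ℝ := fun i j =>
      if i = 3 ∧ (j = 0 ∨ j = 1) then 1
      else if i = 3 ∧ (j = 2 ∨ j = 4) then 4
      else if i = 2 ∧ j = 1 then 4
      else if i = 4 ∧ j = 0 then 8/9 else 0

def NE.L3 (s : Fin 5 → Finset (Fin 5)) : ℝ :=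
  (if (3:Fin 5) ∈ s 0 then 0 else 1) + (if (3:Fin 5) ∈ s 1 then 0 else 1) +
  (if (3:Fin 5) ∈ s 2 then 0 else 4) + (if (3:Fin 5) ∈ s 4 then 0 else 4)

def NE.pay3 (s : Fin 5 → Finset (Fin 5)) (w : ℝ) : ℝ :=
  if NE.L3 s ≤ 8 then w else 2 * w / NE.L3 s

def NE.P30 (s : Fin 5 → Finset (Fin 5)) : ℝ := if (3:Fin 5) ∈ s 0 then 0 else NE.pay3 s 1
def NE.P31 (s : Fin 5 → Finset (Fin 5)) : ℝ := if (3:Fin 5) ∈ s 1 then 0 else NE.pay3 s 1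
def NE.P32 (s : Fin 5 → Finset (Fin 5)) : ℝ := if (3:Fin 5) ∈ s 2 then 0 else NE.pay3 s 4
def NE.P34 (s : Fin 5 → Finset (Fin 5)) : ℝ := if (3:Fin 5) ∈ s 4 then 0 else NE.pay3 s 4
def NE.P21 (s : Fin 5 → Finset (Fin 5)) : ℝ :=
  if (2:Fin 5) ∈ s 1 then 0 else if 4 ≤ NE.P32 s then 4 else NE.P32 s / 4
def NE.P40 (s : Fin 5 → Finset (Fin 5)) : ℝ :=
  if (4:Fin 5) ∈ s 0 then 0 else if 8/9 ≤ NE.P34 s then 8/9 else NE.P34 s / 4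

open NE in
lemma NE.eval (s : Fin 5 → Finset (Fin 5)) (p : Fin 5 → Fin 5 → ℝ)
    (hc : IsClearing (1/4) (1/4) NE.e (removeEdges NE.l s) p) :
    assets NE.e p 0 = P30 s + P40 s ∧
    assets NE.e p 1 = P31 s + P21 s ∧
    assets NE.e p 2 = P32 s ∧
    assets NE.e p 4 = P34 s := by
  obtain ⟨h0, h1, h2, h3⟩ := hc
  have hz : ∀ i j, NE.l i j = 0 → p i j = 0 := by
    intro i j h
    refine le_antisymm ?_ (h0 i j)
    have := h1 i j
    simpa [removeEdges, h] using this
  -- zeros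
  have z00 : p 0 0 = 0 := hz 0 0 (by simp [NE.l])
  have z10 : p 1 0 = 0 := hz 1 0 (by simp [NE.l])
  have z20 : p 2 0 = 0 := hz 2 0 (by simp [NE.l])
  have z01 : p 0 1 = 0 := hz 0 1 (by simp [NE.l])
  have z11 : p 1 1 = 0 := hz 1 1 (by simp [NE.l])
  have z41 : p 4 1 = 0 := hz 4 1 (by simp [NE.l])
  have z02 : p 0 2 = 0 := hz 0 2 (by simp [NE.l])
  have z12 : p 1 2 = 0 := hz 1 2 (by simp [NE.l])
  have z22 : p 2 2 = 0 := hz 2 2 (by simp [NE.l])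
  have z42 : p 4 2 = 0 := hz 4 2 (by simp [NE.l])
  have z04 : p 0 4 = 0 := hz 0 4 (by simp [NE.l])
  have z14 : p 1 4 = 0 := hz 1 4 (by simp [NE.l])
  have z24 : p 2 4 = 0 := hz 2 4 (by simp [NE.l])
  have z44 : p 4 4 = 0 := hz 4 4 (by simp [NE.l])
  have zc3 : ∀ j, p j 3 = 0 := by
    intro j
    refine hz j 3 ?_
    fin_cases j <;> simp [NE.l]
  have hS3 : (∑ j, p j 3) = 0 := by
    simp [Fin.sum_univ_five, zc3]
  have hL3 : (∑ j, removeEdges NE.l s 3 j) = L3 s := by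
    simp [Fin.sum_univ_five, removeEdges, NE.l, L3]
    try ring
  -- payments from bank 3
  have hp3 : p 3 0 = P30 s ∧ p 3 1 = P31 s ∧ p 3 2 = P32 s ∧ p 3 4 = P34 s := by
    by_cases h8 : L3 s ≤ 8
    · have hsol : ∀ j, p 3 j = removeEdges NE.l s 3 j := by
        refine h2 3 ?_
        rw [hL3, hS3]
        simp [NE.e]
        linarith
      refine ⟨?_, ?_, ?_, ?_⟩ <;>
        simp [hsol, removeEdges, NE.l, P30, P31, P32, P34, pay3, h8]
    · have hdef : ∀ j, p 3 j = (1/4 * NE.e 3 + 1/4 * (∑ k, p k 3)) * removeEdges NE.l s 3 j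
          / (∑ k, removeEdges NE.l s 3 k) := by
        refine h3 3 ?_
        rw [hL3, hS3]
        simp [NE.e]
        linarith [lt_of_not_ge h8]
      have he3 : NE.e 3 = 8 := by simp [NE.e]
      refine ⟨?_, ?_, ?_, ?_⟩
      · by_cases ha : (3:Fin 5) ∈ s 0
        · have h' : removeEdges NE.l s 3 0 = 0 := by simp [removeEdges, ha]
          rw [hdef 0, h', P30, if_pos ha]; ring
        · have h' : removeEdges NE.l s 3 0 = 1 := by simp [removeEdges, NE.l, ha]
          rw [hdef 0, h', hL3, hS3, he3, P30, if_neg ha, pay3, if_neg h8]; ring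
      · by_cases ha : (3:Fin 5) ∈ s 1
        · have h' : removeEdges NE.l s 3 1 = 0 := by simp [removeEdges, ha]
          rw [hdef 1, h', P31, if_pos ha]; ring
        · have h' : removeEdges NE.l s 3 1 = 1 := by simp [removeEdges, NE.l, ha]
          rw [hdef 1, h', hL3, hS3, he3, P31, if_neg ha, pay3, if_neg h8]; ring
      · by_cases ha : (3:Fin 5) ∈ s 2
        · have h' : removeEdges NE.l s 3 2 = 0 := by simp [removeEdges, ha]
          rw [hdef 2, h', P32, if_pos ha]; ring
        · have h' : removeEdges NE.l s 3 2 = 4 := by simp [removeEdges, NE.l, ha]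
          rw [hdef 2, h', hL3, hS3, he3, P32, if_neg ha, pay3, if_neg h8]; ring
      · by_cases ha : (3:Fin 5) ∈ s 4
        · have h' : removeEdges NE.l s 3 4 = 0 := by simp [removeEdges, ha]
          rw [hdef 4, h', P34, if_pos ha]; ring
        · have h' : removeEdges NE.l s 3 4 = 4 := by simp [removeEdges, NE.l, ha]
          rw [hdef 4, h', hL3, hS3, he3, P34, if_neg ha, pay3, if_neg h8]; ring
  -- bank 2
  have hS2 : (∑ j, p j 2) = P32 s := by
    rw [Fin.sum_univ_five, z02, z12, z22, z42, hp3.2.2.1]; ring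
  have hp21 : p 2 1 = P21 s := by
    by_cases hd : (2:Fin 5) ∈ s 1
    · rw [P21, if_pos hd]
      refine le_antisymm ?_ (h0 2 1)
      have := h1 2 1
      simpa [removeEdges, hd] using this
    · have hL2 : (∑ j, removeEdges NE.l s 2 j) = 4 := by
        simp [Fin.sum_univ_five, removeEdges, NE.l, hd]
      have he2 : NE.e 2 = 0 := by simp [NE.e]
      rw [P21, if_neg hd]
      by_cases h4 : 4 ≤ P32 s
      · rw [if_pos h4]
        have := h2 2 (by rw [hL2, hS2, he2]; linarith) 1
        rw [this]
        simp [removeEdges, NE.l, hd]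
      · rw [if_neg h4]
        have := h3 2 (by rw [hL2, hS2, he2]; linarith [lt_of_not_ge h4]) 1
        rw [this, hL2, hS2, he2]
        have : removeEdges NE.l s 2 1 = 4 := by simp [removeEdges, NE.l, hd]
        rw [this]; ring
  -- bank 4
  have hS4 : (∑ j, p j 4) = P34 s := by
    rw [Fin.sum_univ_five, z04, z14, z24, z44, hp3.2.2.2]; ring
  have hp40 : p 4 0 = P40 s := by
    by_cases hb : (4:Fin 5) ∈ s 0
    · rw [P40, if_pos hb]
      refine le_antisymm ?_ (h0 4 0)
      have := h1 4 0
      simpa [removeEdges, hb] using this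
    · have hL4 : (∑ j, removeEdges NE.l s 4 j) = 8/9 := by
        simp [Fin.sum_univ_five, removeEdges, NE.l, hb]
      have he4 : NE.e 4 = 0 := by simp [NE.e]
      rw [P40, if_neg hb]
      by_cases h4 : 8/9 ≤ P34 s
      · rw [if_pos h4]
        have := h2 4 (by rw [hL4, hS4, he4]; linarith) 0
        rw [this]
        simp [removeEdges, NE.l, hb]
      · rw [if_neg h4]
        have := h3 4 (by rw [hL4, hS4, he4]; linarith [lt_of_not_ge h4]) 0
        rw [this, hL4, hS4, he4]
        have : removeEdges NE.l s 4 0 = 8/9 := by simp [removeEdges, NE.l, hb]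
        rw [this]; ring
  refine ⟨?_, ?_, by simp [assets, NE.e, hS2], by simp [assets, NE.e, hS4]⟩
  · rw [assets, Fin.sum_univ_five, z00, z10, z20, hp3.1, hp40]
    simp [NE.e]
  · rw [assets, Fin.sum_univ_five, z01, z11, z41, hp3.2.1, hp21]
    simp [NE.e]; ring

end NE

/-- The five-bank network (banks v1,…,v5 ↦ 0,…,4) with `e_{v4} = 8`, liabilities
`l_{v4,v1} = l_{v4,v2} = 1`, `l_{v4,v3} = l_{v4,v5} = 4`, `l_{v3,v2} = 4`,
`l_{v5,v1} = 8/9`, default costs `α = β = 1/4` and no cash injections: the edge-removal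
game on this network admits no pure Nash equilibrium. -/


theorem default_costs_game_no_NE
    (e : Fin 5 → ℝ) (he : e = fun i => if i = 3 then 8 else 0)
    (l : Fin 5 → Fin 5 → ℝ)
    (hl : l = fun i j =>
      if i = 3 ∧ (j = 0 ∨ j = 1) then 1
      else if i = 3 ∧ (j = 2 ∨ j = 4) then 4
      else if i = 2 ∧ j = 1 then 4
      else if i = 4 ∧ j = 0 then 8/9 else 0)
    (Pay : (Fin 5 → Finset (Fin 5)) → Fin 5 → Fin 5 → ℝ)
    (hPay : ∀ s, IsMaxClearing (1/4) (1/4) e (removeEdges l s) (Pay s)) :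
    ¬ ∃ s : Fin 5 → Finset (Fin 5), NashEq e Pay s := by
  have he' : e = NE.e := he
  have hl' : l = NE.l := hl
  subst he' hl'
  rintro ⟨s, hs⟩
  have key : ∀ t, assets NE.e (Pay t) 0 = NE.P30 t + NE.P40 t ∧
      assets NE.e (Pay t) 1 = NE.P31 t + NE.P21 t ∧
      assets NE.e (Pay t) 2 = NE.P32 t ∧
      assets NE.e (Pay t) 4 = NE.P34 t :=
    fun t => NE.eval t (Pay t) (hPay t).1
  by_cases hf : (3:Fin 5) ∈ s 2
  · -- bank 2 deviates to ∅
    have h := hs 2 ∅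
    rw [(key (Function.update s 2 ∅)).2.2.1, (key s).2.2.1] at h
    have m : (3:Fin 5) ∉ (Function.update s 2 ∅) 2 := by simp
    simp only [NE.P32, if_pos hf, if_neg m, NE.pay3] at h
    split_ifs at h with h8
    · norm_num at h
    · have : (0:ℝ) < 2 * 4 / NE.L3 (Function.update s 2 ∅) :=
        div_pos (by norm_num) (by linarith [lt_of_not_ge h8])
      linarith
  · by_cases hg : (3:Fin 5) ∈ s 4
    · -- bank 4 deviates to ∅
      have h := hs 4 ∅
      rw [(key (Function.update s 4 ∅)).2.2.2, (key s).2.2.2] at h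
      have m : (3:Fin 5) ∉ (Function.update s 4 ∅) 4 := by simp
      simp only [NE.P34, if_pos hg, if_neg m, NE.pay3] at h
      split_ifs at h with h8
      · norm_num at h
      · have : (0:ℝ) < 2 * 4 / NE.L3 (Function.update s 4 ∅) :=
          div_pos (by norm_num) (by linarith [lt_of_not_ge h8])
        linarith
    · by_cases hc3 : (3:Fin 5) ∈ s 1
      · by_cases ha : (3:Fin 5) ∈ s 0
        · -- bank 0 deviates to ∅
          have h := hs 0 ∅
          rw [(key (Function.update s 0 ∅)).1, (key s).1] at h
          have m1 : (3:Fin 5) ∉ (Function.update s 0 ∅) 0 := by simp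
          have m2 : (4:Fin 5) ∉ (Function.update s 0 ∅) 0 := by simp
          have e1 : (Function.update s 0 ∅) 1 = s 1 := Function.update_of_ne (by decide) _ _
          have e2 : (Function.update s 0 ∅) 2 = s 2 := Function.update_of_ne (by decide) _ _
          have e4 : (Function.update s 0 ∅) 4 = s 4 := Function.update_of_ne (by decide) _ _
          norm_num [NE.P30, NE.P40, NE.P34, NE.pay3, NE.L3, e1, e2, e4, m1, m2,
            ha, hc3, hf, hg] at h
          split_ifs at h <;> (try norm_num at h) <;> simp_all
        · -- bank 1 deviates to ∅
          have h := hs 1 ∅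
          rw [(key (Function.update s 1 ∅)).2.1, (key s).2.1] at h
          have m1 : (3:Fin 5) ∉ (Function.update s 1 ∅) 1 := by simp
          have m2 : (2:Fin 5) ∉ (Function.update s 1 ∅) 1 := by simp
          have e0 : (Function.update s 1 ∅) 0 = s 0 := Function.update_of_ne (by decide) _ _
          have e2 : (Function.update s 1 ∅) 2 = s 2 := Function.update_of_ne (by decide) _ _
          have e4 : (Function.update s 1 ∅) 4 = s 4 := Function.update_of_ne (by decide) _ _
          norm_num [NE.P31, NE.P21, NE.P32, NE.pay3, NE.L3, e0, e2, e4, m1, m2,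
            ha, hc3, hf, hg] at h
          split_ifs at h <;> (try norm_num at h) <;> simp_all
      · by_cases ha : (3:Fin 5) ∈ s 0
        · -- bank 1 deviates to {3}
          have h := hs 1 {3}
          rw [(key (Function.update s 1 {3})).2.1, (key s).2.1] at h
          have m1 : (3:Fin 5) ∈ (Function.update s 1 {3}) 1 := by simp
          have m2 : (2:Fin 5) ∉ (Function.update s 1 {3}) 1 := by simp
          have e0 : (Function.update s 1 {3}) 0 = s 0 := Function.update_of_ne (by decide) _ _
          have e2 : (Function.update s 1 {3}) 2 = s 2 := Function.update_of_ne (by decide) _ _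
          have e4 : (Function.update s 1 {3}) 4 = s 4 := Function.update_of_ne (by decide) _ _
          norm_num [NE.P31, NE.P21, NE.P32, NE.pay3, NE.L3, e0, e2, e4, m1, m2,
            ha, hc3, hf, hg] at h
          split_ifs at h <;> (try norm_num at h) <;> simp_all
        · -- bank 0 deviates to {3}
          have h := hs 0 {3}
          rw [(key (Function.update s 0 {3})).1, (key s).1] at h
          have m1 : (3:Fin 5) ∈ (Function.update s 0 {3}) 0 := by simp
          have m2 : (4:Fin 5) ∉ (Function.update s 0 {3}) 0 := by simp
          have e1 : (Function.update s 0 {3}) 1 = s 1 := Function.update_of_ne (by decide) _ _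
          have e2 : (Function.update s 0 {3}) 2 = s 2 := Function.update_of_ne (by decide) _ _
          have e4 : (Function.update s 0 {3}) 4 = s 4 := Function.update_of_ne (by decide) _ _
          norm_num [NE.P30, NE.P40, NE.P34, NE.pay3, NE.L3, e1, e2, e4, m1, m2,
            ha, hc3, hf, hg] at h
          split_ifs at h <;> (try norm_num at h) <;> simp_all
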